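/- For smooth vector fields u, b on ℝ³ with j = ∇×b, Ω = ∇×u, ω = Ω·e³, d = j·e³, one has the cancellation identity (j·∇)u³ − (Ω·∇)b³ + 2[∂₁b·∂₂u − ∂₂b·∂₁u] = ∂₃u³ d − ∂₃b³ ω − ∂₃b² ∂₁u³ + ∂₃b¹ ∂₂u³ + ∂₃u² ∂₁b³ − ∂₃u¹ ∂₂b³ + 2[∂₁b¹∂₂u¹ − ∂₂b¹∂₁u¹ + ∂₁b²∂₂u² − ∂₂b²∂₁u²]. -/
import Mathlib


open MeasureTheory Real FourierTransform Filter Topology ENNReal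
noncomputable section

/-- `ℝ³` as a Euclidean space. -/
abbrev V3 : Type := EuclideanSpace ℝ (Fin 3)

/-- `i`-th partial derivative of a real-valued function on `ℝ³`. -/
def pd (i : Fin 3) (f : V3 → ℝ) : V3 → ℝ :=
  fun x => fderiv ℝ f x (EuclideanSpace.single i 1)

/-- Components of the curl of a vector field on `ℝ³`. -/
def curlc (v : V3 → V3) : Fin 3 → V3 → ℝ :=
  ![fun x => pd 1 (fun y => v y 2) x - pd 2 (fun y => v y 1) x,
    fun x => pd 2 (fun y => v y 0) x - pd 0 (fun y => v y 2) x,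
    fun x => pd 0 (fun y => v y 1) x - pd 1 (fun y => v y 0) x]

/-- cancellation identity for the third component of the current density
equation.  With `Ω = ∇×u`, `j = ∇×b`, `ω = ∂₁u² − ∂₂u¹`, `d = ∂₁b² − ∂₂b¹`, and
`∂_i b·∂_j u = Σ_{k} ∂_i b^k ∂_j u^k`:
`(j·∇)u³ − (Ω·∇)b³ + 2[∂₁b·∂₂u − ∂₂b·∂₁u]
  = ∂₃u³ d − ∂₃b³ ω − ∂₃b² ∂₁u³ + ∂₃b¹ ∂₂u³ + ∂₃u² ∂₁b³ − ∂₃u¹ ∂₂b³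
    + 2[∂₁b¹∂₂u¹ − ∂₂b¹∂₁u¹ + ∂₁b²∂₂u² − ∂₂b²∂₁u²]`. -/
theorem current_density_cancellation
    (u b : V3 → V3) (hu : ContDiff ℝ (⊤ : ℕ∞) u) (hb : ContDiff ℝ (⊤ : ℕ∞) b) :
    ∀ x : V3,
      (∑ l : Fin 3, curlc b l x * pd l (fun y => u y 2) x)
        - (∑ l : Fin 3, curlc u l x * pd l (fun y => b y 2) x)
        + 2 * ((∑ k : Fin 3, pd 0 (fun y => b y k) x * pd 1 (fun y => u y k) x)
              - (∑ k : Fin 3, pd 1 (fun y => b y k) x * pd 0 (fun y => u y k) x))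
      = pd 2 (fun y => u y 2) x
            * (pd 0 (fun y => b y 1) x - pd 1 (fun y => b y 0) x)
        - pd 2 (fun y => b y 2) x
            * (pd 0 (fun y => u y 1) x - pd 1 (fun y => u y 0) x)
        - pd 2 (fun y => b y 1) x * pd 0 (fun y => u y 2) x
        + pd 2 (fun y => b y 0) x * pd 1 (fun y => u y 2) x
        + pd 2 (fun y => u y 1) x * pd 0 (fun y => b y 2) x
        - pd 2 (fun y => u y 0) x * pd 1 (fun y => b y 2) x
        + 2 * (pd 0 (fun y => b y 0) x * pd 1 (fun y => u y 0) x
              - pd 1 (fun y => b y 0) x * pd 0 (fun y => u y 0) x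
              + pd 0 (fun y => b y 1) x * pd 1 (fun y => u y 1) x
              - pd 1 (fun y => b y 1) x * pd 0 (fun y => u y 1) x) := by
  intro x
  simp only [Fin.sum_univ_three, curlc, Matrix.cons_val_zero, Matrix.cons_val_one,
    Matrix.head_cons, Matrix.cons_val_two, Matrix.tail_cons]
  ring
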